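/- arXiv:2402.02239 — 7 statements merged into one kernel-verified Lean document; each statement's English description precedes it below -/
import Mathlib

section
/- Suppose L(a,·) is convex for every a ∈ Ω, C_X ∈ Ω^{N×N}, and the image of C_Z : ℝ^{N×d} → ℝ^{N×N} is stable under doubly stochastic matrices: for all Z and all doubly stochastic T there exists Y with C_Z(Y) = T C_Z(Z) Tᵀ. Then min_Z ∑_{ij} L([C_X]_{ij}, [C_Z(Z)]_{ij}) = min_Z min_{T doubly stochastic} ∑_{ijkl} L([C_X]_{ij}, [C_Z(Z)]_{kl}) T_{ik} T_{jl}. -/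
open Matrix

def DoublyStochastic {N : ℕ} (T : Matrix (Fin N) (Fin N) ℝ) : Prop :=
  (∀ i j, 0 ≤ T i j) ∧ (∀ i, ∑ j, T i j = 1) ∧ (∀ j, ∑ i, T i j = 1)

lemma ds_one {N : ℕ} : DoublyStochastic (1 : Matrix (Fin N) (Fin N) ℝ) := by
  refine ⟨fun i j => ?_, fun i => ?_, fun j => ?_⟩ <;>
    simp [Matrix.one_apply] <;> positivity

/-- if `L(a,·)` is convex and the image of `CZ` is stable under doubly
stochastic matrices, then DR equals the GW-type double minimization. -/
theorem stmt2 {N d : ℕ} (Ω : Set ℝ) (L : ℝ → ℝ → ℝ)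
    (CX : Matrix (Fin N) (Fin N) ℝ) (hCX : ∀ i j, CX i j ∈ Ω)
    (hconv : ∀ a ∈ Ω, ConvexOn ℝ Set.univ (L a))
    (CZ : Matrix (Fin N) (Fin d) ℝ → Matrix (Fin N) (Fin N) ℝ)
    (hstable : ∀ (Z : Matrix (Fin N) (Fin d) ℝ) (T : Matrix (Fin N) (Fin N) ℝ),
      DoublyStochastic T → ∃ Y : Matrix (Fin N) (Fin d) ℝ, CZ Y = T * CZ Z * Tᵀ) :
    (⨅ Z : Matrix (Fin N) (Fin d) ℝ, ∑ i, ∑ j, L (CX i j) (CZ Z i j)) =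
      ⨅ p : Matrix (Fin N) (Fin d) ℝ × {T : Matrix (Fin N) (Fin N) ℝ // DoublyStochastic T},
        ∑ i, ∑ j, ∑ k, ∑ l, L (CX i j) (CZ p.1 k l) * p.2.1 i k * p.2.1 j l := by
  rw [iInf, iInf]
  apply csInf_eq_csInf_of_forall_exists_le
  · -- every DR value is attained by a GW value (with T = identity)
    rintro x ⟨Z, rfl⟩
    refine ⟨_, Set.mem_range_self (Z, ⟨1, ds_one⟩), le_of_eq ?_⟩
    simp [Matrix.one_apply, mul_ite, ite_mul, Finset.sum_ite_eq, Finset.sum_ite_eq']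
  · -- every GW value dominates some DR value
    rintro y ⟨⟨Z, T, hT⟩, rfl⟩
    obtain ⟨Y, hY⟩ := hstable Z T hT
    refine ⟨_, Set.mem_range_self Y, ?_⟩
    apply Finset.sum_le_sum
    intro i _
    apply Finset.sum_le_sum
    intro j _
    have key := (hconv (CX i j) (hCX i j)).map_sum_le
      (t := (Finset.univ : Finset (Fin N × Fin N)))
      (w := fun kl => T i kl.1 * T j kl.2)
      (p := fun kl => CZ Z kl.1 kl.2)
      (fun kl _ => mul_nonneg (hT.1 i kl.1) (hT.1 j kl.2))
      (by simp [Fintype.sum_prod_type, ← Finset.mul_sum, hT.2.1])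
      (fun kl _ => Set.mem_univ _)
    calc L (CX i j) (CZ Y i j)
        = L (CX i j) (∑ kl : Fin N × Fin N, (T i kl.1 * T j kl.2) • CZ Z kl.1 kl.2) := by
          rw [hY]
          congr 1
          rw [Fintype.sum_prod_type]
          simp only [smul_eq_mul, Matrix.mul_apply, Matrix.transpose_apply,
            Finset.sum_mul, Finset.mul_sum]
          rw [Finset.sum_comm]
          congr 1; ext k; congr 1; ext l; ring
      _ ≤ ∑ kl : Fin N × Fin N, (T i kl.1 * T j kl.2) * L (CX i j) (CZ Z kl.1 kl.2) := key
      _ = ∑ k, ∑ l, L (CX i j) (CZ Z k l) * T i k * T j l := by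
          rw [Fintype.sum_prod_type]
          congr 1; ext k; congr 1; ext l; ring
end

section
/- For the spectral setting C_Z(Z) = Z Zᵀ with quadratic loss L_2(x,y) = (x−y)², and for any symmetric matrix C_X ∈ ℝ^{N×N}: min over Z ∈ ℝ^{N×d} of ∑_{ij} (⟨z_i, z_j⟩ − [C_X]_{ij})² equals min over Z ∈ ℝ^{N×d} of min over doubly stochastic T ∈ ℝ^{N×N} of ∑_{ijkl} ([C_X]_{ij} − ⟨z_k, z_l⟩)² T_{ik} T_{jl}. -/
open Matrix

lemma jensen_aux {ι : Type*} [Fintype ι] (a x : ι → ℝ) (ha : ∀ i, 0 ≤ a i)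
    (hs : ∑ i, a i = 1) (c : ℝ) :
    ((∑ i, a i * x i) - c) ^ 2 ≤ ∑ i, (c - x i) ^ 2 * a i := by
  have key : (∑ i, a i * x i) - c = -∑ i, a i * (c - x i) := by
    have : ∑ i, a i * (c - x i) = c - ∑ i, a i * x i := by
      simp only [mul_sub, Finset.sum_sub_distrib, ← Finset.sum_mul, hs, one_mul]
    rw [this]; ring
  rw [key, neg_sq]
  have := Finset.sum_mul_sq_le_sq_mul_sq Finset.univ (fun i => Real.sqrt (a i))
      (fun i => Real.sqrt (a i) * (c - x i))
  have h1 : ∀ i : ι, Real.sqrt (a i) * (Real.sqrt (a i) * (c - x i)) = a i * (c - x i) := by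
    intro i
    rw [← mul_assoc, Real.mul_self_sqrt (ha i)]
  have h2 : ∀ i : ι, Real.sqrt (a i) ^ 2 = a i := fun i => Real.sq_sqrt (ha i)
  have h3 : ∀ i : ι, (Real.sqrt (a i) * (c - x i)) ^ 2 = (c - x i) ^ 2 * a i := by
    intro i; rw [mul_pow, h2]; ring
  simp only [h1, h2, h3, hs, one_mul] at this
  exact this

/-- spectral DR (inner products, quadratic loss) equals the
GW double minimization. -/
theorem stmt3 {N d : ℕ} (CX : Matrix (Fin N) (Fin N) ℝ) (hsym : CXᵀ = CX) :
    (⨅ Z : Matrix (Fin N) (Fin d) ℝ,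
        ∑ i, ∑ j, ((∑ m, Z i m * Z j m) - CX i j) ^ 2) =
      ⨅ p : Matrix (Fin N) (Fin d) ℝ × {T : Matrix (Fin N) (Fin N) ℝ // DoublyStochastic T},
        ∑ i, ∑ j, ∑ k, ∑ l,
          (CX i j - ∑ m, p.1 k m * p.1 l m) ^ 2 * p.2.1 i k * p.2.1 j l := by
  have hone : DoublyStochastic (1 : Matrix (Fin N) (Fin N) ℝ) := by
    refine ⟨fun i j => ?_, fun i => ?_, fun j => ?_⟩ <;>
      simp [Matrix.one_apply] <;> positivity
  have bddL : BddBelow (Set.range fun Z : Matrix (Fin N) (Fin d) ℝ =>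
      ∑ i, ∑ j, ((∑ m, Z i m * Z j m) - CX i j) ^ 2) := by
    refine ⟨0, ?_⟩
    rintro x ⟨Z, rfl⟩
    positivity
  have bddR : BddBelow (Set.range fun p : Matrix (Fin N) (Fin d) ℝ ×
      {T : Matrix (Fin N) (Fin N) ℝ // DoublyStochastic T} =>
      ∑ i, ∑ j, ∑ k, ∑ l,
        (CX i j - ∑ m, p.1 k m * p.1 l m) ^ 2 * p.2.1 i k * p.2.1 j l) := by
    refine ⟨0, ?_⟩
    rintro x ⟨p, rfl⟩
    have := p.2.2.1
    refine Finset.sum_nonneg fun i _ => Finset.sum_nonneg fun j _ =>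
      Finset.sum_nonneg fun k _ => Finset.sum_nonneg fun l _ => ?_
    have h1 := this i k
    have h2 := this j l
    positivity
  haveI : Nonempty {T : Matrix (Fin N) (Fin N) ℝ // DoublyStochastic T} := ⟨⟨1, hone⟩⟩
  apply le_antisymm
  · -- LHS ≤ RHS : given (Z, T), use Z' = T * Z
    refine le_ciInf fun p => ?_
    obtain ⟨Z, T, hT⟩ := p
    refine ciInf_le_of_le bddL (T * Z) ?_
    refine Finset.sum_le_sum fun i _ => Finset.sum_le_sum fun j _ => ?_
    -- inner product of rows of T*Z
    have hg : (∑ m, (T * Z) i m * (T * Z) j m)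
        = ∑ q : Fin N × Fin N, (T i q.1 * T j q.2) * (∑ m, Z q.1 m * Z q.2 m) := by
      calc (∑ m, (T * Z) i m * (T * Z) j m)
            = ∑ m, ∑ k, ∑ l, (T i k * Z k m) * (T j l * Z l m) :=
              Finset.sum_congr rfl fun m _ => by
                rw [Matrix.mul_apply, Matrix.mul_apply, Finset.sum_mul_sum]
        _ = ∑ k, ∑ m, ∑ l, (T i k * Z k m) * (T j l * Z l m) := Finset.sum_comm
        _ = ∑ k, ∑ l, ∑ m, (T i k * Z k m) * (T j l * Z l m) :=
              Finset.sum_congr rfl fun k _ => Finset.sum_comm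
        _ = ∑ q : Fin N × Fin N, (T i q.1 * T j q.2) * (∑ m, Z q.1 m * Z q.2 m) := by
              rw [Fintype.sum_prod_type]
              refine Finset.sum_congr rfl fun k _ => Finset.sum_congr rfl fun l _ => ?_
              rw [Finset.mul_sum]
              exact Finset.sum_congr rfl fun m _ => by ring
    rw [hg]
    have ha : ∀ q : Fin N × Fin N, 0 ≤ T i q.1 * T j q.2 :=
      fun q => mul_nonneg (hT.1 i q.1) (hT.1 j q.2)
    have hs : ∑ q : Fin N × Fin N, T i q.1 * T j q.2 = 1 := by
      rw [Fintype.sum_prod_type]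
      simp only [← Finset.mul_sum, hT.2.1 j]
      simp [hT.2.1 i]
    have := jensen_aux (fun q : Fin N × Fin N => T i q.1 * T j q.2)
      (fun q => ∑ m, Z q.1 m * Z q.2 m) ha hs (CX i j)
    refine this.trans_eq ?_
    rw [Fintype.sum_prod_type]
    exact Finset.sum_congr rfl fun k _ => Finset.sum_congr rfl fun l _ => by ring
  · -- RHS ≤ LHS : take T = 1
    refine le_ciInf fun Z => ?_
    refine ciInf_le_of_le bddR ⟨Z, ⟨1, hone⟩⟩ ?_
    refine le_of_eq (Finset.sum_congr rfl fun i _ => Finset.sum_congr rfl fun j _ => ?_)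
    simp only [Matrix.one_apply, mul_ite, mul_one, mul_zero, ite_mul, zero_mul,
      Finset.sum_ite_eq, Finset.mem_univ, if_true]
    ring
end

section
/- Let C ∈ ℝ^{N×N} be a symmetric CPD (or CND) matrix. Then for any matrices P, Q ∈ ℝ^{N×N} with Pᵀ 1_N = Qᵀ 1_N and P 1_N = Q 1_N, one has Tr(Pᵀ C Q C) ≤ (1/2)(Tr(Pᵀ C P C) + Tr(Qᵀ C Q C)). -/
/-!
Put `U = P - Q`. Expanding, and using `Tr(Qᵀ C P C) = Tr(Pᵀ C Q C)` for symmetric `C`, the claim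
is `0 ≤ Tr(Uᵀ C U C)` (replace `C` by `-C` in the CND case). The rows and columns of `U` sum to
zero, so `U` is fixed by the centering matrix `H = I - (1/N) 𝟙𝟙ᵀ` on both sides, and
`Tr(Uᵀ C U C) = Tr(Uᵀ D U D)` with `D = H C H`. Conditional positivity of `C` says exactly that
`D` is positive semidefinite, and then `Tr((Uᵀ D U) D) ≥ 0` as the trace of a product of two
positive semidefinite matrices.
-/

open Matrix

namespace Matrix

variable {m n : Type*} [Fintype n]

def CondPosSemidef (C : Matrix n n ℝ) : Prop :=
  ∀ x : n → ℝ, ∑ i, x i = 0 → 0 ≤ x ⬝ᵥ C *ᵥ x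

open scoped ComplexOrder MatrixOrder in
theorem PosSemidef.trace_mul_nonneg {𝕜 : Type*} [RCLike 𝕜] {A B : Matrix n n 𝕜}
    (hA : A.PosSemidef) (hB : B.PosSemidef) : 0 ≤ (A * B).trace := by
  classical
  obtain ⟨X, rfl⟩ := CStarAlgebra.nonneg_iff_eq_star_mul_self.mp hB.nonneg
  rw [star_eq_conjTranspose, ← mul_assoc, trace_mul_comm, ← mul_assoc]
  exact (hA.mul_mul_conjTranspose_same X).trace_nonneg

theorem PosSemidef.trace_transpose_mul_mul_mul_nonneg {D : Matrix n n ℝ} (hD : D.PosSemidef)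
    (U : Matrix n n ℝ) : 0 ≤ (Uᵀ * D * U * D).trace := by
  have hUDU : (Uᵀ * D * U).PosSemidef := by
    simpa only [conjTranspose_eq_transpose_of_trivial] using hD.conjTranspose_mul_mul_same U
  exact hUDU.trace_mul_nonneg hD

theorem trace_transpose_mul_mul_mul_swap {R : Type*} [CommSemiring R] {C : Matrix n n R}
    (hC : C.IsSymm) (P Q : Matrix n n R) :
    (Qᵀ * C * P * C).trace = (Pᵀ * C * Q * C).trace := by
  rw [← trace_transpose]
  simp only [transpose_mul, transpose_transpose, hC.eq]
  rw [trace_mul_cycle]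
  simp only [mul_assoc]

theorem trace_transpose_sub_mul_mul_sub_mul {R : Type*} [CommRing R] {C : Matrix n n R}
    (hC : C.IsSymm) (P Q : Matrix n n R) :
    ((P - Q)ᵀ * C * (P - Q) * C).trace =
      (Pᵀ * C * P * C).trace - 2 * (Pᵀ * C * Q * C).trace + (Qᵀ * C * Q * C).trace := by
  simp only [transpose_sub, sub_mul, mul_sub, trace_sub, trace_transpose_mul_mul_mul_swap hC]
  ring

variable [DecidableEq n]

noncomputable def centeringMatrix (n : Type*) [Fintype n] [DecidableEq n] : Matrix n n ℝ :=
  1 - (Fintype.card n : ℝ)⁻¹ • of fun _ _ => 1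

theorem centeringMatrix_isSymm : (centeringMatrix n).IsSymm := by
  ext i j
  simp [centeringMatrix, one_apply, eq_comm]

theorem mul_centeringMatrix {U : Matrix m n ℝ} (hU : ∀ i, ∑ j, U i j = 0) :
    U * centeringMatrix n = U := by
  have hJ : U * (of fun _ _ => 1 : Matrix n n ℝ) = 0 := by
    ext i j
    simp [mul_apply, hU i]
  rw [centeringMatrix, Matrix.mul_sub, Matrix.mul_one, Matrix.mul_smul, hJ, smul_zero, sub_zero]

theorem centeringMatrix_mul [Fintype m] {U : Matrix n m ℝ} (hU : ∀ j, ∑ i, U i j = 0) :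
    centeringMatrix n * U = U := by
  have hJ : (of fun _ _ => 1 : Matrix n n ℝ) * U = 0 := by
    ext i j
    simp [mul_apply, hU j]
  rw [centeringMatrix, Matrix.sub_mul, Matrix.one_mul, Matrix.smul_mul, hJ, smul_zero, sub_zero]

theorem sum_centeringMatrix_mulVec (x : n → ℝ) : ∑ i, (centeringMatrix n *ᵥ x) i = 0 := by
  rcases isEmpty_or_nonempty n with hn | hn
  · simp
  simp only [centeringMatrix, sub_mulVec, one_mulVec, smul_mulVec, Pi.sub_apply,
    Pi.smul_apply, smul_eq_mul, Finset.sum_sub_distrib, ← Finset.mul_sum]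
  simp [mulVec, dotProduct]

theorem CondPosSemidef.posSemidef_centeringMatrix_mul_mul {C : Matrix n n ℝ} (hsym : C.IsSymm)
    (hC : C.CondPosSemidef) : (centeringMatrix n * C * centeringMatrix n).PosSemidef := by
  refine PosSemidef.of_dotProduct_mulVec_nonneg ?_ fun x => ?_
  · rw [IsHermitian, conjTranspose_eq_transpose_of_trivial]
    simp only [transpose_mul, centeringMatrix_isSymm.eq, hsym.eq, mul_assoc]
  · rw [star_trivial, ← mulVec_mulVec, ← mulVec_mulVec, dotProduct_mulVec, ← mulVec_transpose,
      centeringMatrix_isSymm.eq]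
    exact hC _ (sum_centeringMatrix_mulVec x)

theorem CondPosSemidef.trace_transpose_mul_mul_mul_nonneg {C : Matrix n n ℝ} (hsym : C.IsSymm)
    (hC : C.CondPosSemidef) {U : Matrix n n ℝ} (hrow : ∀ i, ∑ j, U i j = 0)
    (hcol : ∀ j, ∑ i, U i j = 0) : 0 ≤ (Uᵀ * C * U * C).trace := by
  set H := centeringMatrix n
  have hHsymm : Hᵀ = H := centeringMatrix_isSymm
  have hUH : U * H = U := mul_centeringMatrix hrow
  have hHU : H * U = U := centeringMatrix_mul hcol
  have hUtH : Uᵀ * H = Uᵀ := by rw [← hHsymm, ← transpose_mul, hHU]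
  have hHUt : H * Uᵀ = Uᵀ := by rw [← hHsymm, ← transpose_mul, hUH]
  -- Every `H` is absorbed by a neighbouring `U` or `Uᵀ`, the last one after cycling the trace.
  have hcollapse : (Uᵀ * (H * C * H) * U * (H * C * H)).trace = (Uᵀ * C * U * C).trace := by
    calc (Uᵀ * (H * C * H) * U * (H * C * H)).trace
        = ((Uᵀ * H) * C * (H * U) * (H * C * H)).trace := by simp only [mul_assoc]
      _ = (H * Uᵀ * C * (U * H) * C).trace := by
          rw [hUtH, hHU]
          simp only [← mul_assoc]
          rw [trace_mul_comm]
          simp only [mul_assoc]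
      _ = (Uᵀ * C * U * C).trace := by rw [hUH, hHUt]
  rw [← hcollapse]
  exact (hC.posSemidef_centeringMatrix_mul_mul hsym).trace_transpose_mul_mul_mul_nonneg U

end Matrix

/-- trace inequality for CPD (or CND) matrices and matrices with
equal row and column marginals. -/
theorem stmt6 {N : ℕ} (C : Matrix (Fin N) (Fin N) ℝ) (hsym : Cᵀ = C)
    (hdef : (∀ x : Fin N → ℝ, (∑ i, x i) = 0 → 0 ≤ x ⬝ᵥ C.mulVec x) ∨
            (∀ x : Fin N → ℝ, (∑ i, x i) = 0 → x ⬝ᵥ C.mulVec x ≤ 0))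
    (P Q : Matrix (Fin N) (Fin N) ℝ)
    (hcol : ∀ j, ∑ i, P i j = ∑ i, Q i j)
    (hrow : ∀ i, ∑ j, P i j = ∑ j, Q i j) :
    Matrix.trace (Pᵀ * C * Q * C) ≤
      (1 / 2) * (Matrix.trace (Pᵀ * C * P * C) + Matrix.trace (Qᵀ * C * Q * C)) := by
  have hrowU : ∀ i, ∑ j, (P - Q) i j = 0 := fun i => by
    simp [Finset.sum_sub_distrib, hrow i]
  have hcolU : ∀ j, ∑ i, (P - Q) i j = 0 := fun j => by
    simp [Finset.sum_sub_distrib, hcol j]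
  have hnonneg : 0 ≤ ((P - Q)ᵀ * C * (P - Q) * C).trace := by
    rcases hdef with hpos | hneg
    · exact CondPosSemidef.trace_transpose_mul_mul_mul_nonneg hsym hpos hrowU hcolU
    · have hnegC : (-C).CondPosSemidef := fun x hx => by
        simpa [neg_mulVec] using hneg x hx
      have hnegsym : (-C).IsSymm := by rw [IsSymm, transpose_neg, hsym]
      simpa using hnegC.trace_transpose_mul_mul_mul_nonneg hnegsym hrowU hcolU
  rw [trace_transpose_sub_mul_mul_sub_mul hsym] at hnonneg
  linarith
end

section
/- Let h ∈ Σ_N be a probability vector with strictly positive entries, and let C̄ ∈ ℝ^{n×n} attain its minimum entry on the diagonal, say at position (1,1). Suppose L(a,·) is convex and non-decreasing for every a. Then the coupling T* ∈ ℝ^{N×n} with first column equal to h and all other columns zero is a minimizer of T ↦ ∑_{ijkl} L(C_{ij}, C̄_{kl}) T_{ik} T_{jl} over the set {T ∈ ℝ_+^{N×n} : T 1_n = h}, for any symmetric C ∈ ℝ^{N×N}, and the optimal value equals ∑_{ij} L(C_{ij}, C̄_{11}) h_i h_j. -/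
open Matrix

/-- with `L(a,·)` convex and non-decreasing and `C̄` attaining its
minimum entry at the (1,1) diagonal position, the coupling sending all the mass
to the first column is optimal for the semi-relaxed GW objective, with value
`∑ᵢⱼ L(C i j, C̄ 0 0) hᵢ hⱼ`. -/
theorem stmt9 {N n : ℕ} [NeZero n] (h : Fin N → ℝ)
    (hpos : ∀ i, 0 < h i) (hsum : ∑ i, h i = 1)
    (C : Matrix (Fin N) (Fin N) ℝ) (hCsym : Cᵀ = C)
    (Cb : Matrix (Fin n) (Fin n) ℝ)
    (hmin : ∀ k l, Cb 0 0 ≤ Cb k l)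
    (L : ℝ → ℝ → ℝ)
    (hconv : ∀ a : ℝ, ConvexOn ℝ Set.univ (L a))
    (hmono : ∀ a : ℝ, Monotone (L a)) :
    (∀ T : Matrix (Fin N) (Fin n) ℝ,
        (∀ i k, 0 ≤ T i k) → (∀ i, ∑ k, T i k = h i) →
        (∑ i, ∑ j, ∑ k, ∑ l, L (C i j) (Cb k l) *
            (fun (i' : Fin N) (k' : Fin n) => if k' = 0 then h i' else 0) i k *
            (fun (j' : Fin N) (l' : Fin n) => if l' = 0 then h j' else 0) j l) ≤
          ∑ i, ∑ j, ∑ k, ∑ l, L (C i j) (Cb k l) * T i k * T j l) ∧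
      (∑ i, ∑ j, ∑ k, ∑ l, L (C i j) (Cb k l) *
          (fun (i' : Fin N) (k' : Fin n) => if k' = 0 then h i' else 0) i k *
          (fun (j' : Fin N) (l' : Fin n) => if l' = 0 then h j' else 0) j l) =
        ∑ i, ∑ j, L (C i j) (Cb 0 0) * h i * h j := by
  have key : (∑ i, ∑ j, ∑ k, ∑ l, L (C i j) (Cb k l) *
          (fun (i' : Fin N) (k' : Fin n) => if k' = 0 then h i' else 0) i k *
          (fun (j' : Fin N) (l' : Fin n) => if l' = 0 then h j' else 0) j l) =
        ∑ i, ∑ j, L (C i j) (Cb 0 0) * h i * h j := by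
    refine Finset.sum_congr rfl fun i _ => Finset.sum_congr rfl fun j _ => ?_
    simp [mul_ite, ite_mul, mul_zero, zero_mul, Finset.sum_ite_eq']
  refine ⟨fun T hTnn hTrow => ?_, key⟩
  rw [key]
  refine Finset.sum_le_sum fun i _ => Finset.sum_le_sum fun j _ => ?_
  have : L (C i j) (Cb 0 0) * h i * h j
      = ∑ k, ∑ l, L (C i j) (Cb 0 0) * T i k * T j l := by
    simp only [← Finset.mul_sum, ← Finset.sum_mul, hTrow]
  rw [this]
  refine Finset.sum_le_sum fun k _ => Finset.sum_le_sum fun l _ => ?_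
  have h1 : L (C i j) (Cb 0 0) ≤ L (C i j) (Cb k l) := hmono _ (hmin k l)
  have h2 : 0 ≤ T i k * T j l := mul_nonneg (hTnn i k) (hTnn j l)
  calc L (C i j) (Cb 0 0) * T i k * T j l = L (C i j) (Cb 0 0) * (T i k * T j l) := by ring
    _ ≤ L (C i j) (Cb k l) * (T i k * T j l) := mul_le_mul_of_nonneg_right h1 h2
    _ = L (C i j) (Cb k l) * T i k * T j l := by ring
end

section
/- Fix a symmetric matrix C_X ∈ ℝ^{N×N} and a coupling T ∈ ℝ_+^{N×n} with T 1_n = h. Define C̄(T) ∈ ℝ^{n×n} by C̄(T)_{ij} = (T_{:,i}ᵀ C_X T_{:,j}) / ((T_{:,i}ᵀ 1_N)(T_{:,j}ᵀ 1_N)) when columns T_{:,i} and T_{:,j} are nonzero, and 0 otherwise. Then C̄(T) minimizes the convex function C̄ ↦ ∑_{ijkl} ([C_X]_{ik} − C̄_{jl})² T_{ij} T_{kl} over C̄ ∈ ℝ^{n×n}. -/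
open Matrix Classical

/-- The optimal barycenter structure matrix `C̄(T)` associated with a coupling `T`. -/
noncomputable def CbarOf {N n : ℕ} (CX : Matrix (Fin N) (Fin N) ℝ)
    (T : Matrix (Fin N) (Fin n) ℝ) : Matrix (Fin n) (Fin n) ℝ :=
  fun i j =>
    if (fun k => T k i) ≠ 0 ∧ (fun k => T k j) ≠ 0 then
      (∑ k, ∑ l, T k i * CX k l * T l j) / ((∑ k, T k i) * (∑ k, T k j))
    else 0

/-- `C̄(T)` minimizes the convex quadratic `C̄ ↦ ∑ (C_X ik − C̄ jl)² T ij T kl`. -/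
theorem stmt10 {N n : ℕ} (CX : Matrix (Fin N) (Fin N) ℝ) (hsym : CXᵀ = CX)
    (h : Fin N → ℝ) (hnn : ∀ i, 0 ≤ h i) (hsum : ∑ i, h i = 1)
    (T : Matrix (Fin N) (Fin n) ℝ)
    (hTnn : ∀ i k, 0 ≤ T i k) (hTrow : ∀ i, ∑ k, T i k = h i) :
    ∀ Cb : Matrix (Fin n) (Fin n) ℝ,
      (∑ i, ∑ j, ∑ k, ∑ l, (CX i k - CbarOf CX T j l) ^ 2 * T i j * T k l) ≤
        ∑ i, ∑ j, ∑ k, ∑ l, (CX i k - Cb j l) ^ 2 * T i j * T k l := by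
  intro Cb
  -- reorder sums: bring j, l outside
  have reorder : ∀ M : Matrix (Fin n) (Fin n) ℝ,
      (∑ i, ∑ j, ∑ k, ∑ l, (CX i k - M j l) ^ 2 * T i j * T k l)
        = ∑ j, ∑ l, ∑ i, ∑ k, (CX i k - M j l) ^ 2 * T i j * T k l := by
    intro M
    rw [Finset.sum_comm]
    refine Finset.sum_congr rfl fun j _ => ?_
    conv_rhs => rw [Finset.sum_comm]
    refine Finset.sum_congr rfl fun i _ => ?_
    rw [Finset.sum_comm]
  rw [reorder, reorder]
  refine Finset.sum_le_sum fun j _ => Finset.sum_le_sum fun l _ => ?_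
  set s1 := ∑ i, T i j with hs1
  set s2 := ∑ k, T k l with hs2
  have expand : ∀ c : ℝ,
      (∑ i, ∑ k, (CX i k - c) ^ 2 * T i j * T k l)
        = (∑ i, ∑ k, CX i k ^ 2 * T i j * T k l)
          - 2 * c * (∑ i, ∑ k, CX i k * T i j * T k l) + c ^ 2 * (s1 * s2) := by
    intro c
    have hS : s1 * s2 = ∑ i, ∑ k, T i j * T k l := by
      rw [Finset.sum_mul_sum]
    rw [hS]
    rw [Finset.mul_sum, Finset.mul_sum]
    rw [← Finset.sum_sub_distrib, ← Finset.sum_add_distrib]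
    refine Finset.sum_congr rfl fun i _ => ?_
    rw [Finset.mul_sum, Finset.mul_sum]
    rw [← Finset.sum_sub_distrib, ← Finset.sum_add_distrib]
    refine Finset.sum_congr rfl fun k _ => ?_
    ring
  by_cases hz : s1 = 0 ∨ s2 = 0
  · -- degenerate case: all summands vanish
    have hzero : ∀ c : ℝ, (∑ i, ∑ k, (CX i k - c) ^ 2 * T i j * T k l) = 0 := by
      intro c
      rcases hz with hz | hz
      · have hcol : ∀ i, T i j = 0 := by
          intro i
          have := (Finset.sum_eq_zero_iff_of_nonneg (fun i _ => hTnn i j)).mp hz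
          exact this i (Finset.mem_univ i)
        refine Finset.sum_eq_zero fun i _ => Finset.sum_eq_zero fun k _ => ?_
        rw [hcol i]; ring
      · have hcol : ∀ k, T k l = 0 := by
          intro k
          have := (Finset.sum_eq_zero_iff_of_nonneg (fun k _ => hTnn k l)).mp hz
          exact this k (Finset.mem_univ k)
        refine Finset.sum_eq_zero fun i _ => Finset.sum_eq_zero fun k _ => ?_
        rw [hcol k]; ring
    rw [hzero, hzero]
  · push_neg at hz
    obtain ⟨h1, h2⟩ := hz
    have h1pos : 0 < s1 := lt_of_le_of_ne (Finset.sum_nonneg fun i _ => hTnn i j) (Ne.symm h1)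
    have h2pos : 0 < s2 := lt_of_le_of_ne (Finset.sum_nonneg fun k _ => hTnn k l) (Ne.symm h2)
    have hspos : 0 < s1 * s2 := mul_pos h1pos h2pos
    have hc1 : (fun k => T k j) ≠ 0 := by
      intro hcontra
      apply h1
      rw [hs1]
      refine Finset.sum_eq_zero fun i _ => ?_
      exact congrFun hcontra i
    have hc2 : (fun k => T k l) ≠ 0 := by
      intro hcontra
      apply h2
      rw [hs2]
      refine Finset.sum_eq_zero fun k _ => ?_
      exact congrFun hcontra k
    set a := ∑ i, ∑ k, CX i k * T i j * T k l with ha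
    have hCbar : CbarOf CX T j l = a / (s1 * s2) := by
      rw [CbarOf, if_pos ⟨hc1, hc2⟩]
      congr 1
      refine Finset.sum_congr rfl fun i _ => Finset.sum_congr rfl fun k _ => ?_
      ring
    rw [expand, expand, hCbar]
    have key : 0 ≤ (s1 * s2) * (Cb j l - a / (s1 * s2)) ^ 2 :=
      mul_nonneg (le_of_lt hspos) (sq_nonneg _)
    have hfield : (s1 * s2) * (Cb j l - a / (s1 * s2)) ^ 2
        = (- (2 * Cb j l * a) + Cb j l ^ 2 * (s1 * s2))
          - (- (2 * (a / (s1 * s2)) * a) + (a / (s1 * s2)) ^ 2 * (s1 * s2)) := by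
      field_simp
      ring
    linarith [key, hfield ▸ key]
end

section
/- With C̄(T) as above and T a coupling whose columns are all nonzero, the minimal value min_{C̄} ∑_{ijkl}([C_X]_{ik} − C̄_{jl})² T_{ij} T_{kl} equals ∑_{ik} [C_X]²_{ik} h_i h_k − ‖ D(T)^{1/2} Tᵀ C_X T D(T)^{1/2} ‖_F², where D(T) = diag(Tᵀ 1_N)^{-1}. -/
open Matrix

/-- value of the inner minimization of the semi-relaxed GW barycenter
problem, when all columns of `T` are nonzero. -/
theorem stmt11 {N n : ℕ} (CX : Matrix (Fin N) (Fin N) ℝ) (hsym : CXᵀ = CX)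
    (h : Fin N → ℝ) (hnn : ∀ i, 0 ≤ h i) (hsum : ∑ i, h i = 1)
    (T : Matrix (Fin N) (Fin n) ℝ)
    (hTnn : ∀ i k, 0 ≤ T i k) (hTrow : ∀ i, ∑ k, T i k = h i)
    (hcols : ∀ k : Fin n, (fun i => T i k) ≠ 0) :
    (⨅ Cb : Matrix (Fin n) (Fin n) ℝ,
        ∑ i, ∑ j, ∑ k, ∑ l, (CX i k - Cb j l) ^ 2 * T i j * T k l) =
      (∑ i, ∑ k, (CX i k) ^ 2 * h i * h k) -
        ∑ i, ∑ j,
          ((Matrix.diagonal (fun k => Real.sqrt (∑ i', T i' k)⁻¹) * Tᵀ * CX * T *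
              Matrix.diagonal (fun k => Real.sqrt (∑ i', T i' k)⁻¹)) i j) ^ 2 := by
  classical
  set s : Fin n → ℝ := fun k => ∑ i', T i' k with hs
  have hspos : ∀ k, 0 < s k := by
    intro k
    rcases (Finset.sum_nonneg fun i _ => hTnn i k).lt_or_eq with hlt | heq
    · exact hlt
    · exfalso
      apply hcols k
      funext i
      exact (Finset.sum_eq_zero_iff_of_nonneg (fun i _ => hTnn i k)).mp heq.symm i
        (Finset.mem_univ i)
  set M : Matrix (Fin n) (Fin n) ℝ := Tᵀ * CX * T with hM
  have hMentry : ∀ j l, M j l = ∑ i, ∑ k, CX i k * T i j * T k l := by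
    intro j l
    rw [hM]
    simp only [Matrix.mul_apply, transpose_apply, Finset.sum_mul]
    rw [Finset.sum_comm]
    exact Finset.sum_congr rfl fun i _ => Finset.sum_congr rfl fun k _ => by ring
  have swap4 : ∀ (f : Fin N → Fin n → Fin N → Fin n → ℝ),
      ∑ i, ∑ j, ∑ k, ∑ l, f i j k l = ∑ j, ∑ l, ∑ i, ∑ k, f i j k l := by
    intro f
    rw [Finset.sum_comm]
    refine Finset.sum_congr rfl fun j _ => ?_
    calc ∑ i, ∑ k, ∑ l, f i j k l
        = ∑ i, ∑ l, ∑ k, f i j k l :=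
          Finset.sum_congr rfl fun i _ => Finset.sum_comm
      _ = ∑ l, ∑ i, ∑ k, f i j k l := Finset.sum_comm
  -- Expansion of the objective as a quadratic in `Cb`.
  have step1 : ∀ Cb : Matrix (Fin n) (Fin n) ℝ,
      (∑ i, ∑ j, ∑ k, ∑ l, (CX i k - Cb j l) ^ 2 * T i j * T k l)
        = (∑ i, ∑ k, (CX i k) ^ 2 * h i * h k)
          - 2 * (∑ j, ∑ l, Cb j l * M j l)
          + ∑ j, ∑ l, (Cb j l) ^ 2 * (s j * s l) := by
    intro Cb
    have e1 : ∀ (i : Fin N) (j : Fin n) (k : Fin N) (l : Fin n),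
        (CX i k - Cb j l) ^ 2 * T i j * T k l
          = (CX i k) ^ 2 * T i j * T k l
            - 2 * (CX i k * T i j * T k l * Cb j l)
            + (Cb j l) ^ 2 * T i j * T k l := by
      intros; ring
    simp only [e1, Finset.sum_add_distrib, Finset.sum_sub_distrib]
    have hA : (∑ i, ∑ j, ∑ k, ∑ l, (CX i k) ^ 2 * T i j * T k l)
        = ∑ i, ∑ k, (CX i k) ^ 2 * h i * h k := by
      refine Finset.sum_congr rfl fun i _ => ?_
      calc ∑ j, ∑ k, ∑ l, (CX i k) ^ 2 * T i j * T k l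
          = ∑ j, ∑ k, (CX i k) ^ 2 * T i j * h k := by
            refine Finset.sum_congr rfl fun j _ => Finset.sum_congr rfl fun k _ => ?_
            rw [← Finset.mul_sum, hTrow k]
        _ = ∑ k, ∑ j, (CX i k) ^ 2 * T i j * h k := Finset.sum_comm
        _ = ∑ k, ∑ j, ((CX i k) ^ 2 * h k) * T i j := by
            refine Finset.sum_congr rfl fun k _ => Finset.sum_congr rfl fun j _ => ?_
            ring
        _ = ∑ k, (CX i k) ^ 2 * h i * h k := by
            refine Finset.sum_congr rfl fun k _ => ?_
            rw [← Finset.mul_sum, hTrow i]; ring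
    have hP : (∑ i, ∑ j, ∑ k, ∑ l, 2 * (CX i k * T i j * T k l * Cb j l))
        = 2 * (∑ j, ∑ l, Cb j l * M j l) := by
      rw [swap4]
      rw [Finset.mul_sum]
      refine Finset.sum_congr rfl fun j _ => ?_
      rw [Finset.mul_sum]
      refine Finset.sum_congr rfl fun l _ => ?_
      rw [hMentry j l, Finset.mul_sum, Finset.mul_sum]
      refine Finset.sum_congr rfl fun i _ => ?_
      rw [Finset.mul_sum, Finset.mul_sum]
      refine Finset.sum_congr rfl fun k _ => ?_
      ring
    have hQ : (∑ i, ∑ j, ∑ k, ∑ l, (Cb j l) ^ 2 * T i j * T k l)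
        = ∑ j, ∑ l, (Cb j l) ^ 2 * (s j * s l) := by
      rw [swap4]
      refine Finset.sum_congr rfl fun j _ => ?_
      refine Finset.sum_congr rfl fun l _ => ?_
      calc ∑ i, ∑ k, (Cb j l) ^ 2 * T i j * T k l
          = ∑ i, (Cb j l) ^ 2 * T i j * s l := by
            refine Finset.sum_congr rfl fun i _ => ?_
            rw [← Finset.mul_sum]
        _ = ∑ i, ((Cb j l) ^ 2 * s l) * T i j := by
            refine Finset.sum_congr rfl fun i _ => ?_; ring
        _ = (Cb j l) ^ 2 * (s j * s l) := by
            rw [← Finset.mul_sum]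
            show (Cb j l) ^ 2 * s l * s j = _
            ring
    rw [hA, hP, hQ]
  set A := ∑ i, ∑ k, (CX i k) ^ 2 * h i * h k with hA'
  set B := ∑ j, ∑ l, (M j l) ^ 2 / (s j * s l) with hB'
  set c : Matrix (Fin n) (Fin n) ℝ := fun j l => M j l / (s j * s l) with hc
  have per : ∀ (Cb : Matrix (Fin n) (Fin n) ℝ) (j l : Fin n),
      s j * s l * (Cb j l - c j l) ^ 2
        = (Cb j l) ^ 2 * (s j * s l) - 2 * (Cb j l * M j l) + (M j l) ^ 2 / (s j * s l) := by
    intro Cb j l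
    have h1 : s j ≠ 0 := (hspos j).ne'
    have h2 : s l ≠ 0 := (hspos l).ne'
    simp only [hc]
    field_simp
    ring
  have key : ∀ Cb : Matrix (Fin n) (Fin n) ℝ,
      (∑ i, ∑ j, ∑ k, ∑ l, (CX i k - Cb j l) ^ 2 * T i j * T k l)
        = (A - B) + ∑ j, ∑ l, s j * s l * (Cb j l - c j l) ^ 2 := by
    intro Cb
    rw [step1 Cb]
    have e : ∑ j, ∑ l, s j * s l * (Cb j l - c j l) ^ 2
        = (∑ j, ∑ l, (Cb j l) ^ 2 * (s j * s l)) - 2 * (∑ j, ∑ l, Cb j l * M j l) + B := by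
      rw [hB']
      simp only [per Cb, Finset.sum_add_distrib, Finset.sum_sub_distrib, Finset.mul_sum]
    rw [e]
    ring
  have hFc : (∑ i, ∑ j, ∑ k, ∑ l, (CX i k - c j l) ^ 2 * T i j * T k l) = A - B := by
    rw [key c]
    simp
  have hlb : ∀ Cb : Matrix (Fin n) (Fin n) ℝ,
      A - B ≤ ∑ i, ∑ j, ∑ k, ∑ l, (CX i k - Cb j l) ^ 2 * T i j * T k l := by
    intro Cb
    rw [key Cb]
    have h0 : 0 ≤ ∑ j, ∑ l, s j * s l * (Cb j l - c j l) ^ 2 :=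
      Finset.sum_nonneg fun j _ => Finset.sum_nonneg fun l _ =>
        mul_nonneg (mul_nonneg (hspos j).le (hspos l).le) (sq_nonneg _)
    linarith
  have hbdd : BddBelow (Set.range fun Cb : Matrix (Fin n) (Fin n) ℝ =>
      ∑ i, ∑ j, ∑ k, ∑ l, (CX i k - Cb j l) ^ 2 * T i j * T k l) := by
    refine ⟨A - B, ?_⟩
    rintro x ⟨Cb, rfl⟩
    exact hlb Cb
  have hinf : (⨅ Cb : Matrix (Fin n) (Fin n) ℝ,
      ∑ i, ∑ j, ∑ k, ∑ l, (CX i k - Cb j l) ^ 2 * T i j * T k l) = A - B :=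
    le_antisymm (hFc ▸ ciInf_le hbdd c) (le_ciInf hlb)
  rw [hinf]
  set d : Fin n → ℝ := fun k => Real.sqrt (∑ i', T i' k)⁻¹ with hd
  have em : Matrix.diagonal d * Tᵀ * CX * T * Matrix.diagonal d
      = Matrix.diagonal d * M * Matrix.diagonal d := by
    rw [hM]
    simp only [Matrix.mul_assoc]
  have hd2 : ∀ k, d k ^ 2 = (s k)⁻¹ := fun k =>
    Real.sq_sqrt (inv_nonneg.mpr (hspos k).le)
  have hBeq : B = ∑ i, ∑ j,
      ((Matrix.diagonal d * Tᵀ * CX * T * Matrix.diagonal d) i j) ^ 2 := by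
    rw [hB', em]
    refine Finset.sum_congr rfl fun i _ => Finset.sum_congr rfl fun j _ => ?_
    rw [Matrix.mul_diagonal, Matrix.diagonal_mul, mul_pow, mul_pow, hd2, hd2,
      div_eq_mul_inv, mul_inv]
    ring
  rw [hBeq]
end

section
/- Suppose the quadratic function T ↦ ∑_{ijkl} L([C_X]_{ij}, [C_Z]_{kl}) T_{ik} T_{jl} is concave on the coupling polytope U(1_N/N, 1_N/N). Then its minimum over U(1_N/N, 1_N/N) equals (1/N²) · min over permutations σ ∈ S_N of ∑_{ij} L([C_X]_{ij}, [C_Z]_{σ(i)σ(j)}). -/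
open Matrix Pointwise

/-- if the GW quadratic objective is concave on the coupling polytope
`U(1/N, 1/N)`, then its minimum equals `1/N²` times the Gromov–Monge minimum over
permutations. -/
theorem stmt19 {N : ℕ} (L : ℝ → ℝ → ℝ)
    (CX CZ : Matrix (Fin N) (Fin N) ℝ)
    (hconc : ConcaveOn ℝ
      {T : Matrix (Fin N) (Fin N) ℝ | (∀ i j, 0 ≤ T i j) ∧
        (∀ i, ∑ j, T i j = (N : ℝ)⁻¹) ∧ ∀ j, ∑ i, T i j = (N : ℝ)⁻¹}
      (fun T => ∑ i, ∑ j, ∑ k, ∑ l, L (CX i j) (CZ k l) * T i k * T j l)) :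
    (⨅ T : {T : Matrix (Fin N) (Fin N) ℝ // (∀ i j, 0 ≤ T i j) ∧
        (∀ i, ∑ j, T i j = (N : ℝ)⁻¹) ∧ ∀ j, ∑ i, T i j = (N : ℝ)⁻¹},
        ∑ i, ∑ j, ∑ k, ∑ l, L (CX i j) (CZ k l) * T.1 i k * T.1 j l) =
      ((N : ℝ) ^ 2)⁻¹ *
        ⨅ σ : Equiv.Perm (Fin N), ∑ i, ∑ j, L (CX i j) (CZ (σ i) (σ j)) := by
  classical
  set f : Matrix (Fin N) (Fin N) ℝ → ℝ :=
    fun T => ∑ i, ∑ j, ∑ k, ∑ l, L (CX i j) (CZ k l) * T i k * T j l with hf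
  set g : Equiv.Perm (Fin N) → ℝ :=
    fun σ => ∑ i, ∑ j, L (CX i j) (CZ (σ i) (σ j)) with hg
  rcases Nat.eq_zero_or_pos N with h0 | hNpos
  · subst h0
    have h1 : (⨅ T : {T : Matrix (Fin 0) (Fin 0) ℝ // (∀ i j, 0 ≤ T i j) ∧
        (∀ i, ∑ j, T i j = ((0:ℕ) : ℝ)⁻¹) ∧ ∀ j, ∑ i, T i j = ((0:ℕ) : ℝ)⁻¹},
        ∑ i, ∑ j, ∑ k, ∑ l, L (CX i j) (CZ k l) * T.1 i k * T.1 j l) = 0 := by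
      have hne : Nonempty {T : Matrix (Fin 0) (Fin 0) ℝ // (∀ i j, 0 ≤ T i j) ∧
          (∀ i, ∑ j, T i j = ((0:ℕ) : ℝ)⁻¹) ∧ ∀ j, ∑ i, T i j = ((0:ℕ) : ℝ)⁻¹} :=
        ⟨⟨0, fun i j => le_refl _, fun i => i.elim0, fun j => j.elim0⟩⟩
      simp
    rw [h1]; simp
  have hN : (0:ℝ) < N := by exact_mod_cast hNpos
  -- scaled permutation matrices
  set t : Set (Matrix (Fin N) (Fin N) ℝ) :=
    (fun M => (N:ℝ)⁻¹ • M) '' {M | ∃ σ : Equiv.Perm (Fin N), σ.permMatrix ℝ = M} with ht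
  set S : Set (Matrix (Fin N) (Fin N) ℝ) :=
    {T : Matrix (Fin N) (Fin N) ℝ | (∀ i j, 0 ≤ T i j) ∧
      (∀ i, ∑ j, T i j = (N : ℝ)⁻¹) ∧ ∀ j, ∑ i, T i j = (N : ℝ)⁻¹} with hS
  -- each scaled permutation matrix is in S
  have hmemS : ∀ σ : Equiv.Perm (Fin N), ((N:ℝ)⁻¹ • σ.permMatrix ℝ) ∈ S := by
    intro σ
    refine ⟨fun i j => ?_, fun i => ?_, fun j => ?_⟩
    · simp only [Matrix.smul_apply, Equiv.Perm.permMatrix, PEquiv.toMatrix_apply,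
        Equiv.toPEquiv_apply, Option.mem_def, Option.some.injEq, smul_eq_mul]
      split <;> positivity
    · simp only [Matrix.smul_apply, Equiv.Perm.permMatrix, PEquiv.toMatrix_apply,
        Equiv.toPEquiv_apply, Option.mem_def, Option.some.injEq, smul_eq_mul,
        mul_ite, mul_one, mul_zero, Finset.sum_ite_eq, Finset.mem_univ, if_true]
    · simp only [Matrix.smul_apply, Equiv.Perm.permMatrix, PEquiv.toMatrix_apply,
        Equiv.toPEquiv_apply, Option.mem_def, Option.some.injEq, smul_eq_mul,
        mul_ite, mul_one, mul_zero]
      rw [Finset.sum_eq_single (σ.symm j)]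
      · simp
      · intro i _ hi
        rw [if_neg]
        intro hc; exact hi (by simpa using congrArg σ.symm hc)
      · simp
  have htS : t ⊆ S := by
    rintro M ⟨M', ⟨σ, rfl⟩, rfl⟩; exact hmemS σ
  -- value of f on a scaled permutation matrix
  have hval : ∀ σ : Equiv.Perm (Fin N), f ((N:ℝ)⁻¹ • σ.permMatrix ℝ) = ((N:ℝ)^2)⁻¹ * g σ := by
    intro σ
    simp only [hf, hg, Matrix.smul_apply, Equiv.Perm.permMatrix, PEquiv.toMatrix_apply,
      Equiv.toPEquiv_apply, Option.mem_def, Option.some.injEq, smul_eq_mul,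
      mul_ite, ite_mul, mul_one, mul_zero, zero_mul, Finset.sum_ite_eq,
      Finset.mem_univ, if_true]
    rw [Finset.mul_sum]
    congr 1; ext i
    rw [Finset.mul_sum]
    congr 1; ext j
    ring
  -- every element of S lies in the convex hull of t
  have hhull : ∀ T ∈ S, T ∈ convexHull ℝ t := by
    intro T hT
    have hds : (N:ℝ) • T ∈ doublyStochastic ℝ (Fin N) := by
      rw [mem_doublyStochastic_iff_sum]
      refine ⟨fun i j => ?_, fun i => ?_, fun j => ?_⟩
      · simp only [Matrix.smul_apply, smul_eq_mul]
        have := hT.1 i j; positivity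
      · simp only [Matrix.smul_apply, smul_eq_mul, ← Finset.mul_sum, hT.2.1 i]
        field_simp
      · simp only [Matrix.smul_apply, smul_eq_mul, ← Finset.mul_sum, hT.2.2 j]
        field_simp
    have hds' : ((N:ℝ) • T) ∈
        convexHull ℝ {M | ∃ σ : Equiv.Perm (Fin N), Equiv.Perm.permMatrix ℝ σ = M} := by
      rw [← doublyStochastic_eq_convexHull_permMatrix]; exact hds
    have : (N:ℝ)⁻¹ • ((N:ℝ) • T) ∈
        (N:ℝ)⁻¹ • convexHull ℝ {M | ∃ σ : Equiv.Perm (Fin N), σ.permMatrix ℝ = M} :=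
      Set.smul_mem_smul_set hds'
    rw [smul_smul, inv_mul_cancel₀ (ne_of_gt hN), one_smul] at this
    rw [← convexHull_smul] at this
    rw [ht, Set.image_smul]
    exact this
  -- minimizer over permutations
  obtain ⟨σ₀, hσ₀⟩ := Finite.exists_min g
  have hinfg : (⨅ σ : Equiv.Perm (Fin N), g σ) = g σ₀ :=
    le_antisymm (ciInf_le (Finite.bddBelow_range g) σ₀) (le_ciInf hσ₀)
  -- the common lower bound
  have hlb : ∀ T ∈ S, ((N:ℝ)^2)⁻¹ * g σ₀ ≤ f T := by
    intro T hT
    obtain ⟨y, hy, hyT⟩ := hconc.exists_le_of_mem_convexHull htS (hhull T hT)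
    obtain ⟨M', ⟨σ, rfl⟩, rfl⟩ := hy
    calc ((N:ℝ)^2)⁻¹ * g σ₀ ≤ ((N:ℝ)^2)⁻¹ * g σ :=
          mul_le_mul_of_nonneg_left (hσ₀ σ) (by positivity)
      _ = f ((N:ℝ)⁻¹ • σ.permMatrix ℝ) := (hval σ).symm
      _ ≤ f T := hyT
  haveI hne : Nonempty {T : Matrix (Fin N) (Fin N) ℝ // (∀ i j, 0 ≤ T i j) ∧
      (∀ i, ∑ j, T i j = (N : ℝ)⁻¹) ∧ ∀ j, ∑ i, T i j = (N : ℝ)⁻¹} := ⟨⟨_, hmemS σ₀⟩⟩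
  have hbdd : BddBelow (Set.range fun T : {T : Matrix (Fin N) (Fin N) ℝ //
      (∀ i j, 0 ≤ T i j) ∧
      (∀ i, ∑ j, T i j = (N : ℝ)⁻¹) ∧ ∀ j, ∑ i, T i j = (N : ℝ)⁻¹} =>
      ∑ i, ∑ j, ∑ k, ∑ l, L (CX i j) (CZ k l) * T.1 i k * T.1 j l) := by
    refine ⟨((N:ℝ)^2)⁻¹ * g σ₀, ?_⟩
    rintro x ⟨T, rfl⟩; exact hlb T.1 T.2
  rw [hinfg]
  exact le_antisymm ((ciInf_le hbdd ⟨_, hmemS σ₀⟩).trans (le_of_eq (hval σ₀)))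
    (le_ciInf fun T => hlb T.1 T.2)
end
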